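/- arXiv:0808.2230 — 3 statements merged into one kernel-verified Lean document; each statement's English description precedes it below -/
import Mathlib

section
/- In ℤ[√−5], if α is irreducible but not prime, then |N(α)| = p₁p₂ where p₁, p₂ are positive rational primes each equal to 2 or congruent to 3 or 7 modulo 20; conversely any element whose norm is such a product p₁p₂ of primes of this type (each lying below a nonprincipal prime ideal) is irreducible but not prime. -/
/-!
For `M ∣ c² + 5`, the elements `x + y√-5` with `M ∣ x - c y` form an ideal, and an element of norm
`M` in it divides all its elements. For `M ≡ 1, 9 (mod 20)` Thue's lemma gives a point of the
ideal with `x² + 5y² = kM`, `k < 6`, and congruences mod 8 and mod 5 together with division by `2`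
or `√-5` bring `k` down to `1`. On the other hand `x² + 5y² mod 8` is never `2`, `3` or `7`, so no
element has norm `2` or a prime `p ≡ 3 (mod 4)`. Hence every rational prime `p` other than `2` and
`p ≡ 3, 7 (mod 20)` lies below a prime element: `√-5`, an element of norm `p` (`p ≡ 1, 9`), or `p`
itself when `-5` is not a square mod `p`.

If `α` is irreducible but not prime, no such prime element divides `α ᾱ`, so every prime factor
of `N(α)` is `2` or `≡ 3, 7 (mod 20)`. Either a rational prime `r` divides `α`, and then `α ~ r`,
or `N(α)` is coprime to the imaginary part of `α`, is not divisible by `4`, and is neither `2`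
nor a prime; two odd prime factors `p, q` then have `pq ≡ 1, 9 (mod 20)`, the ideal above gives
a divisor of `α` of norm `pq`, and irreducibility forces `N(α) = pq`.

Conversely, the only divisors of `p₁ p₂` that are norms are `1` and `p₁ p₂`, so `α` is
irreducible; and if `α ∣ α ᾱ = p₁ p₂` were prime, `α` would be associated with `p₁`, which is not
prime since `p₁ ∣ (c + √-5)(c - √-5)`.
-/

open Zsqrtd

theorem Int.sq_emod_eight (x : ℤ) :
    (x % 2 = 0 ∧ (x ^ 2 % 8 = 0 ∨ x ^ 2 % 8 = 4)) ∨ (x % 2 = 1 ∧ x ^ 2 % 8 = 1) := by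
  have h : x % 8 = 0 ∨ x % 8 = 1 ∨ x % 8 = 2 ∨ x % 8 = 3 ∨ x % 8 = 4 ∨ x % 8 = 5 ∨ x % 8 = 6 ∨
    x % 8 = 7 := by omega
  rcases h with h | h | h | h | h | h | h | h <;> simp [pow_two, Int.mul_emod x x 8, h] <;> omega

theorem Int.sq_emod_five (x : ℤ) : (x % 5 = 0 ∧ x ^ 2 % 5 = 0) ∨ x ^ 2 % 5 = 1 ∨ x ^ 2 % 5 = 4 := by
  have h : x % 5 = 0 ∨ x % 5 = 1 ∨ x % 5 = 2 ∨ x % 5 = 3 ∨ x % 5 = 4 := by omega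
  rcases h with h | h | h | h | h <;> simp [pow_two, Int.mul_emod, h]

/-- Thue's lemma, from Dirichlet's approximation of `c / M` with denominator at most `√M`. -/
theorem Int.exists_sq_lt_dvd_sub_mul {M : ℕ} (hM : 0 < M) (c : ℤ) :
    ∃ x y : ℤ, y ≠ 0 ∧ x ^ 2 < M ∧ y ^ 2 ≤ M ∧ (M : ℤ) ∣ x - c * y := by
  set s := Nat.sqrt M
  obtain ⟨j, k, hk0, hks, hjk⟩ := Real.exists_int_int_abs_mul_sub_le (c / M) (Nat.sqrt_pos.2 hM)
  refine ⟨k * c - j * M, k, hk0.ne', ?_, ?_, ⟨-j, by ring⟩⟩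
  · have hM0 : (0 : ℝ) < M := by exact_mod_cast hM
    have hs : (M : ℝ) < (s + 1) ^ 2 := by exact_mod_cast Nat.lt_succ_sqrt' M
    have hX : |((k * c - j * M : ℤ) : ℝ)| ≤ M / (s + 1) := by
      rw [show ((k * c - j * M : ℤ) : ℝ) = M * (k * (c / M) - j) by push_cast; field_simp,
        abs_mul, abs_of_pos hM0, div_eq_mul_one_div (M : ℝ)]
      exact mul_le_mul_of_nonneg_left hjk hM0.le
    suffices ((k * c - j * M : ℤ) : ℝ) ^ 2 < M by exact_mod_cast this
    calc ((k * c - j * M : ℤ) : ℝ) ^ 2 = |((k * c - j * M : ℤ) : ℝ)| ^ 2 := (sq_abs _).symm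
      _ ≤ (M / (s + 1)) ^ 2 := pow_le_pow_left₀ (abs_nonneg _) hX 2
      _ < M := by
        rw [div_pow, div_lt_iff₀ (by positivity)]
        nlinarith
  · exact (pow_le_pow_left₀ hk0.le hks 2).trans (by exact_mod_cast Nat.sqrt_le' M)

theorem ZMod.isSquare_intCast_iff {n : ℕ} {a : ℤ} :
    IsSquare (a : ZMod n) ↔ ∃ c : ℤ, (n : ℤ) ∣ c ^ 2 - a := by
  simp_rw [← ZMod.intCast_zmod_eq_zero_iff_dvd, Int.cast_sub, Int.cast_pow, sub_eq_zero]
  constructor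
  · rintro ⟨r, hr⟩
    obtain ⟨c, rfl⟩ := ZMod.intCast_surjective r
    exact ⟨c, by rw [hr, sq]⟩
  · rintro ⟨c, hc⟩
    exact ⟨c, by rw [← hc, sq]⟩

theorem Nat.Prime.exists_dvd_sq_add_five_iff {p : ℕ} (hp : p.Prime) (hp2 : p ≠ 2) (hp5 : p ≠ 5) :
    (∃ c : ℤ, (p : ℤ) ∣ c ^ 2 + 5) ↔ p % 20 = 1 ∨ p % 20 = 3 ∨ p % 20 = 7 ∨ p % 20 = 9 := by
  have := Fact.mk hp
  have h5 : ((-5 : ℤ) : ZMod p) ≠ 0 := by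
    rw [Ne, ZMod.intCast_zmod_eq_zero_iff_dvd, Int.dvd_neg]
    exact_mod_cast fun h => hp5 ((Nat.prime_dvd_prime_iff_eq hp Nat.prime_five).1 h)
  simp_rw [← sub_neg_eq_add _ (5 : ℤ), ← ZMod.isSquare_intCast_iff, ← legendreSym.eq_one_iff p h5,
    jacobiSym.legendreSym.to_jacobiSym, jacobiSym.mod_right _ (hp.odd_of_ne_two hp2),
    show 4 * (-5 : ℤ).natAbs = 20 from rfl]
  have h20 : p % 20 = 1 ∨ p % 20 = 3 ∨ p % 20 = 7 ∨ p % 20 = 9 ∨ p % 20 = 11 ∨ p % 20 = 13 ∨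
      p % 20 = 17 ∨ p % 20 = 19 := by
    have := hp.eq_one_or_self_of_dvd 2
    have := hp.eq_one_or_self_of_dvd 5
    omega
  rcases h20 with h | h | h | h | h | h | h | h <;> rw [h] <;> norm_num

namespace Zsqrtd

variable {d : ℤ}

theorem not_isUnit_natCast {n : ℕ} (hn : n ≠ 1) : ¬IsUnit (n : ℤ√d) := by
  rw [← norm_eq_one_iff, norm_natCast, Int.natAbs_mul, Int.natAbs_natCast]
  exact fun h => hn (Nat.eq_one_of_mul_eq_one_right h)

theorem natCast_dvd_of_dvd_norm_of_dvd_im {α : ℤ√d} {p : ℕ} (hp : p.Prime)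
    (hnorm : (p : ℤ) ∣ α.norm) (him : (p : ℤ) ∣ α.im) : (p : ℤ√d) ∣ α := by
  have hre : (p : ℤ) ∣ α.re := (Nat.prime_iff_prime_int.mp hp).dvd_of_dvd_pow (n := 2) <| by
    rw [sq, show α.re * α.re = α.norm + d * α.im * α.im by rw [norm_def]; ring]
    exact dvd_add hnorm (him.mul_left _ |>.mul_right _)
  exact_mod_cast (intCast_dvd _ _).2 ⟨hre, him⟩

theorem isCoprime_norm_im {α : ℤ√d} (h : ∀ p : ℕ, p.Prime → ¬(p : ℤ√d) ∣ α) :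
    IsCoprime α.norm α.im := by
  rw [Int.isCoprime_iff_gcd_eq_one]
  exact Nat.coprime_of_dvd fun p hp h₁ h₂ =>
    h p hp (natCast_dvd_of_dvd_norm_of_dvd_im hp (Int.natCast_dvd.2 h₁) (Int.natCast_dvd.2 h₂))

theorem dvd_of_norm_dvd_re_sub_mul_im {α β : ℤ√d} {c : ℤ} (hβ0 : β.norm ≠ 0)
    (hc : β.norm ∣ c ^ 2 - d) (hα : β.norm ∣ α.re - c * α.im) (hβ : β.norm ∣ β.re - c * β.im) :
    β ∣ α := by
  -- both coordinates of `α * star β` vanish mod `N(β)` once `x ≡ c y` on `α` and `β`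
  obtain ⟨γ, hγ⟩ : (β.norm : ℤ√d) ∣ α * star β := by
    rw [intCast_dvd, re_mul, im_mul, re_star, im_star]
    constructor
    · rw [show α.re * β.re + d * α.im * -β.im =
        β.re * (α.re - c * α.im) + c * α.im * (β.re - c * β.im) + α.im * β.im * (c ^ 2 - d) by ring]
      exact dvd_add (dvd_add (hα.mul_left _) (hβ.mul_left _)) (hc.mul_left _)
    · rw [show α.re * -β.im + α.im * β.re = α.im * (β.re - c * β.im) - β.im * (α.re - c * α.im) by
        ring]
      exact dvd_sub (hβ.mul_left _) (hα.mul_left _)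
  refine ⟨γ, Zsqrtd.eq_of_smul_eq_smul_left hβ0 ?_⟩
  calc (β.norm : ℤ√d) * α = α * star β * β := by rw [norm_eq_mul_conj]; ring
    _ = β.norm * (β * γ) := by rw [hγ, norm_eq_mul_conj]; ring

theorem exists_dvd_sq_sub_of_isCoprime {α : ℤ√d} {M : ℤ} (hM : M ∣ α.norm)
    (hcop : IsCoprime M α.im) : ∃ c, M ∣ c ^ 2 - d ∧ M ∣ α.re - c * α.im := by
  obtain ⟨u, v, huv⟩ := hcop
  obtain ⟨w, hw⟩ := hM
  -- `c = α.re / α.im` mod `M`, with `v` the inverse of `α.im` mod `M`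
  rw [norm_def] at hw
  refine ⟨α.re * v, ⟨v ^ 2 * w - d * u * (2 - u * M), ?_⟩, ⟨α.re * u, ?_⟩⟩
  · linear_combination v ^ 2 * hw + d * (v * α.im + 1 - u * M) * huv
  · linear_combination (-α.re) * huv

theorem prime_of_norm_eq_prime {π : ℤ√d} {p : ℕ} (hp : p.Prime) (hπ : π.norm = p) : Prime π := by
  have hp0 : (p : ℤ) ≠ 0 := by exact_mod_cast hp.ne_zero
  have him : IsCoprime (p : ℤ) π.im := by
    refine (Nat.prime_iff_prime_int.mp hp).coprime_iff_not_dvd.mpr fun him => ?_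
    obtain ⟨γ, hγ⟩ := natCast_dvd_of_dvd_norm_of_dvd_im hp (hπ ▸ dvd_refl _) him
    have h1 : (p : ℤ) * (p * γ.norm) = p * 1 := by
      rw [← mul_assoc, ← norm_natCast, ← norm_mul, ← hγ, hπ, mul_one]
    exact hp.ne_one (by exact_mod_cast
      Int.eq_one_of_mul_eq_one_right (by positivity) (mul_left_cancel₀ hp0 h1))
  obtain ⟨c, hcd, hcπ⟩ := exists_dvd_sq_sub_of_isCoprime (hπ ▸ dvd_refl _) him
  -- `(π)` is the kernel of `φ`, a ring hom to a field
  let φ : ℤ√d →+* ZMod p := lift ⟨-(c : ZMod p), by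
    rw [neg_mul_neg, ← sub_eq_zero, ← sq]
    exact_mod_cast (ZMod.intCast_zmod_eq_zero_iff_dvd _ p).2 hcd⟩
  have hφ_eq_zero : ∀ μ, φ μ = 0 ↔ (p : ℤ) ∣ μ.re - c * μ.im := fun μ => by
    rw [← ZMod.intCast_zmod_eq_zero_iff_dvd]
    simp only [φ, lift_apply_apply]
    push_cast
    ring_nf
  have hφ : ∀ μ, π ∣ μ ↔ φ μ = 0 := fun μ =>
    ⟨fun ⟨γ, hγ⟩ => by rw [hγ, map_mul, (hφ_eq_zero π).2 hcπ, zero_mul], fun h =>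
      dvd_of_norm_dvd_re_sub_mul_im (by rwa [hπ]) (by rwa [hπ]) (by rwa [hπ, ← hφ_eq_zero])
        (by rwa [hπ])⟩
  have := Fact.mk hp
  refine ⟨fun h => hp0 (by simpa [h] using hπ.symm), fun h => ?_, fun a b hab => ?_⟩
  · have := norm_eq_one_iff.2 h
    rw [hπ] at this
    exact hp.ne_one (by exact_mod_cast this)
  · rwa [hφ, map_mul, mul_eq_zero, ← hφ, ← hφ] at hab

theorem prime_natCast_of_forall_not_dvd {p : ℕ} (hp : p.Prime)
    (h : ∀ c : ℤ, ¬(p : ℤ) ∣ c ^ 2 - d) : Prime (p : ℤ√d) := by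
  have hpZ := Nat.prime_iff_prime_int.mp hp
  have hdvd : ∀ μ : ℤ√d, (p : ℤ) ∣ μ.norm → (p : ℤ√d) ∣ μ := fun μ hμ => by
    refine natCast_dvd_of_dvd_norm_of_dvd_im hp hμ (not_not.1 fun him => ?_)
    obtain ⟨c, hc, -⟩ := exists_dvd_sq_sub_of_isCoprime hμ (hpZ.coprime_iff_not_dvd.2 him)
    exact h c hc
  refine ⟨Nat.cast_ne_zero.2 hp.ne_zero, not_isUnit_natCast hp.ne_one, fun a b ⟨γ, hγ⟩ => ?_⟩
  have : (p : ℤ) ∣ a.norm * b.norm :=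
    ⟨p * γ.norm, by rw [← norm_mul, hγ, norm_mul, norm_natCast]; ring⟩
  exact (hpZ.dvd_or_dvd this).imp (hdvd a) (hdvd b)

theorem not_prime_natCast_of_dvd {n : ℕ} (hn : n ≠ 1) {c : ℤ} (h : (n : ℤ) ∣ c ^ 2 - d) :
    ¬Prime (n : ℤ√d) := by
  intro hpr
  have hdvd : (n : ℤ√d) ∣ ⟨c, 1⟩ * ⟨c, -1⟩ := by
    rw [← Int.cast_natCast, intCast_dvd]
    simp only [re_mul, im_mul]
    exact ⟨by convert h using 1; ring, by simp⟩
  have hn1 : ¬(n : ℤ) ∣ 1 := by exact_mod_cast mt Nat.dvd_one.1 hn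
  rcases hpr.dvd_or_dvd hdvd with h' | h'
  all_goals
    rw [← Int.cast_natCast, intCast_dvd] at h'
    exact hn1 (by simpa using h'.2)

theorem prime_of_irreducible_of_prime_dvd_mul_star {α π : ℤ√d} (hα : Irreducible α)
    (hπ : Prime π) (h : π ∣ α * star α) : Prime α := by
  have key : ∀ π : ℤ√d, Prime π → π ∣ α → Prime α := fun π hπ ⟨γ, hγ⟩ =>
    have hγu := (hα.isUnit_or_isUnit hγ).resolve_left hπ.not_isUnit
    (hγ ▸ associated_mul_unit_right π γ hγu).prime hπ
  rcases hπ.dvd_or_dvd h with h | h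
  · exact key π hπ h
  · refine key (star π) ((MulEquiv.prime_iff (starRingAut (R := ℤ√d))).2 hπ) ?_
    simpa using map_dvd (starRingAut (R := ℤ√d)) h

theorem natAbs_norm_eq_of_dvd_of_irreducible {α β : ℤ√d} (hα : Irreducible α) (hβ : β ∣ α)
    (hβu : ¬IsUnit β) : α.norm.natAbs = β.norm.natAbs := by
  obtain ⟨γ, rfl⟩ := hβ
  rw [norm_mul, Int.natAbs_mul, norm_eq_one_iff.2 ((hα.isUnit_or_isUnit rfl).resolve_left hβu),
    mul_one]

end Zsqrtd

namespace ZsqrtdNegFive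

/-- For a rational prime `p`, the prime ideals of `ℤ[√-5]` above `p` are nonprincipal exactly when
`p` satisfies this condition. -/
def IsNonprincipalBelow (p : ℕ) : Prop := p = 2 ∨ p % 20 = 3 ∨ p % 20 = 7

theorem norm_eq (α : ℤ√(-5)) : α.norm = α.re ^ 2 + 5 * α.im ^ 2 := by
  rw [norm_def]; ring

theorem natAbs_norm_eq (α : ℤ√(-5)) : (α.norm.natAbs : ℤ) = α.re ^ 2 + 5 * α.im ^ 2 := by
  rw [Int.natAbs_of_nonneg (norm_nonneg (by norm_num) α), norm_eq]

theorem two_dvd_of_four_dvd_norm {α : ℤ√(-5)} (h : 4 ∣ α.norm.natAbs) : (2 : ℤ√(-5)) ∣ α := by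
  have h' := natAbs_norm_eq α
  have : (2 : ℤ) ∣ α.re ∧ (2 : ℤ) ∣ α.im := by
    rcases Int.sq_emod_eight α.re with h1 | h1 <;> rcases Int.sq_emod_eight α.im with h2 | h2 <;>
      omega
  exact_mod_cast (intCast_dvd 2 α).2 this

theorem natAbs_norm_ne {p : ℕ} (hp : IsNonprincipalBelow p) (β : ℤ√(-5)) : β.norm.natAbs ≠ p := by
  intro h
  have h' := natAbs_norm_eq β
  rw [h] at h'
  unfold IsNonprincipalBelow at hp
  rcases Int.sq_emod_eight β.re with h1 | h1 <;> rcases Int.sq_emod_eight β.im with h2 | h2 <;>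
    omega

theorem exists_norm_eq_of_dvd_sq_add_five {M : ℕ} (hM : M % 20 = 1 ∨ M % 20 = 9) {c : ℤ}
    (hc : (M : ℤ) ∣ c ^ 2 + 5) : ∃ β : ℤ√(-5), β.norm = M ∧ (M : ℤ) ∣ β.re - c * β.im := by
  obtain ⟨x, y, hy, hxM, hyM, hxy⟩ := Int.exists_sq_lt_dvd_sub_mul (by omega : 0 < M) c
  obtain ⟨k, hk⟩ : (M : ℤ) ∣ x ^ 2 + 5 * y ^ 2 := by
    rw [show x ^ 2 + 5 * y ^ 2 = (x - c * y) * (x + c * y) + y ^ 2 * (c ^ 2 + 5) by ring]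
    exact dvd_add (hxy.mul_right _) (hc.mul_left _)
  -- `x² + 5y² = kM` with `k < 6`: `k = 2, 3` are impossible mod 8 and mod 5, while for `k = 4, 5`
  -- the point is divisible by `2`, resp. `√-5`, and the quotient stays in the lattice.
  have hy2 : 0 < y ^ 2 := by positivity
  have hk0 : 0 < k := by nlinarith
  have hk6 : k < 6 := by nlinarith
  interval_cases k
  · exact ⟨⟨x, y⟩, by rw [norm_eq]; linarith, hxy⟩
  · rcases Int.sq_emod_eight x with h | h <;> rcases Int.sq_emod_eight y with h' | h' <;> omega
  · rcases Int.sq_emod_five x with h | h | h <;> omega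
  · obtain ⟨⟨u, rfl⟩, ⟨v, rfl⟩⟩ : 2 ∣ x ∧ 2 ∣ y := by
      rcases Int.sq_emod_eight x with h | h <;> rcases Int.sq_emod_eight y with h' | h' <;> omega
    have h2 : IsCoprime (M : ℤ) 2 := (Int.prime_two.coprime_iff_not_dvd.2 (by omega)).symm
    refine ⟨⟨u, v⟩, by rw [norm_eq]; linarith, h2.dvd_of_dvd_mul_left ?_⟩
    change (M : ℤ) ∣ 2 * (u - c * v)
    convert hxy using 1
    ring
  · obtain ⟨u, rfl⟩ : 5 ∣ x := by
      rcases Int.sq_emod_five x with h | h | h <;> omega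
    have h5 : IsCoprime (M : ℤ) 5 :=
      ((by norm_num : Prime (5 : ℤ)).coprime_iff_not_dvd.2 (by omega)).symm
    refine ⟨⟨y, -u⟩, by rw [norm_eq]; linarith, h5.dvd_of_dvd_mul_left ?_⟩
    change (M : ℤ) ∣ 5 * (y - c * -u)
    rw [show 5 * (y - c * -u) = c * (5 * u - c * y) + y * (c ^ 2 + 5) by ring]
    exact dvd_add (hxy.mul_left c) (hc.mul_left y)

theorem exists_dvd_norm_eq {α : ℤ√(-5)} {M : ℕ} (hM : M % 20 = 1 ∨ M % 20 = 9)
    (hMα : (M : ℤ) ∣ α.norm) (hcop : IsCoprime (M : ℤ) α.im) : ∃ β, β ∣ α ∧ β.norm = M := by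
  obtain ⟨c, hc, hcα⟩ := exists_dvd_sq_sub_of_isCoprime hMα hcop
  rw [sub_neg_eq_add] at hc
  obtain ⟨β, hβ, hcβ⟩ := exists_norm_eq_of_dvd_sq_add_five hM hc
  have hM0 : β.norm ≠ 0 := by rw [hβ]; omega
  refine ⟨β, dvd_of_norm_dvd_re_sub_mul_im (c := c) hM0 ?_ ?_ ?_, hβ⟩ <;> rw [hβ]
  exacts [by rwa [sub_neg_eq_add], hcα, hcβ]

theorem exists_dvd_sq_add_five {p : ℕ} (hp : p.Prime) (h : IsNonprincipalBelow p) :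
    ∃ c : ℤ, (p : ℤ) ∣ c ^ 2 + 5 := by
  rcases h with rfl | h
  · exact ⟨1, by norm_num⟩
  · exact (hp.exists_dvd_sq_add_five_iff (by omega) (by omega)).2 (by omega)

theorem exists_prime_dvd_natCast {p : ℕ} (hp : p.Prime) (h : ¬IsNonprincipalBelow p) :
    ∃ π : ℤ√(-5), Prime π ∧ π ∣ p := by
  have of_norm_eq (π : ℤ√(-5)) (hπ : π.norm = p) : ∃ π : ℤ√(-5), Prime π ∧ π ∣ p :=
    ⟨π, prime_of_norm_eq_prime hp hπ, star π, by rw [← norm_eq_mul_conj, hπ, Int.cast_natCast]⟩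
  unfold IsNonprincipalBelow at h
  by_cases hp5 : p = 5
  · exact of_norm_eq ⟨0, 1⟩ (by rw [norm_eq, hp5]; norm_num)
  by_cases hc : ∃ c : ℤ, (p : ℤ) ∣ c ^ 2 + 5
  · have h20 := (hp.exists_dvd_sq_add_five_iff (by omega) hp5).1 hc
    obtain ⟨c, hc⟩ := hc
    obtain ⟨β, hβ, -⟩ := exists_norm_eq_of_dvd_sq_add_five (by omega) hc
    exact of_norm_eq β hβ
  · push Not at hc
    exact ⟨p, prime_natCast_of_forall_not_dvd hp fun c => by simpa using hc c, dvd_rfl⟩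

theorem isNonprincipalBelow_of_dvd_norm {α : ℤ√(-5)} (hα : Irreducible α) (hα' : ¬Prime α)
    {p : ℕ} (hp : p.Prime) (h : p ∣ α.norm.natAbs) : IsNonprincipalBelow p := by
  by_contra hL
  obtain ⟨π, hπ, hπp⟩ := exists_prime_dvd_natCast hp hL
  refine hα' (prime_of_irreducible_of_prime_dvd_mul_star hα hπ (hπp.trans ?_))
  rw [← norm_eq_mul_conj, ← Int.cast_natCast]
  exact map_dvd (Int.castRingHom _) (Int.natCast_dvd.2 h)

theorem exists_natAbs_norm_eq_mul_of_forall_not_natCast_dvd {α : ℤ√(-5)} (hα : Irreducible α)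
    (hL : ∀ p : ℕ, p.Prime → p ∣ α.norm.natAbs → IsNonprincipalBelow p)
    (hr : ∀ r : ℕ, r.Prime → ¬(r : ℤ√(-5)) ∣ α) :
    ∃ p₁ p₂ : ℕ, p₁.Prime ∧ p₂.Prime ∧ IsNonprincipalBelow p₁ ∧ IsNonprincipalBelow p₂ ∧
      α.norm.natAbs = p₁ * p₂ := by
  have h4 : ¬4 ∣ α.norm.natAbs := fun h =>
    hr 2 Nat.prime_two (by exact_mod_cast two_dvd_of_four_dvd_norm h)
  have hn2 : 2 < α.norm.natAbs := by
    have h0 : α.norm.natAbs ≠ 0 := fun h => h4 (h ▸ dvd_zero 4)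
    have h1 : α.norm.natAbs ≠ 1 := fun h => hα.not_isUnit (norm_eq_one_iff.1 h)
    have h2 := natAbs_norm_ne (Or.inl rfl) α
    omega
  obtain ⟨p, hp, ⟨m, hm⟩, hp2⟩ :=
    (Nat.four_dvd_or_exists_odd_prime_and_dvd_of_two_lt hn2).resolve_left h4
  have hpL : p % 20 = 3 ∨ p % 20 = 7 :=
    (hL p hp (hm ▸ dvd_mul_right p m)).resolve_left (hp2.ne_two_of_dvd_nat dvd_rfl)
  rcases m.eq_two_pow_or_exists_odd_prime_and_dvd with ⟨_ | _ | k, rfl⟩ | ⟨q, hq, ⟨m', rfl⟩, hq2⟩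
  · exact absurd (by simpa using hm) (natAbs_norm_ne (Or.inr hpL) α)
  · exact ⟨p, 2, hp, Nat.prime_two, Or.inr hpL, Or.inl rfl, hm⟩
  · exact absurd ⟨p * 2 ^ k, by rw [hm]; ring⟩ h4
  have hqL : q % 20 = 3 ∨ q % 20 = 7 :=
    (hL q hq ⟨p * m', by rw [hm]; ring⟩).resolve_left (hq2.ne_two_of_dvd_nat dvd_rfl)
  have h20 : p * q % 20 = 1 ∨ p * q % 20 = 9 := by
    rw [Nat.mul_mod]; rcases hpL with h | h <;> rcases hqL with h' | h' <;> simp [h, h']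
  have hpqα : ((p * q : ℕ) : ℤ) ∣ α.norm :=
    Int.natCast_dvd.2 ⟨m', by rw [hm]; ring⟩
  obtain ⟨β, hβα, hβ⟩ :=
    exists_dvd_norm_eq h20 hpqα ((isCoprime_norm_im hr).of_isCoprime_of_dvd_left hpqα)
  have hβu : ¬IsUnit β := by
    rw [← norm_eq_one_iff, hβ, Int.natAbs_natCast]
    exact fun h => hp.ne_one (Nat.eq_one_of_mul_eq_one_right h)
  refine ⟨p, q, hp, hq, Or.inr hpL, Or.inr hqL, ?_⟩
  rw [natAbs_norm_eq_of_dvd_of_irreducible hα hβα hβu, hβ, Int.natAbs_natCast]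

theorem exists_natAbs_norm_eq_mul_of_irreducible_of_not_prime {α : ℤ√(-5)} (hα : Irreducible α)
    (hα' : ¬Prime α) :
    ∃ p₁ p₂ : ℕ, p₁.Prime ∧ p₂.Prime ∧ IsNonprincipalBelow p₁ ∧ IsNonprincipalBelow p₂ ∧
      α.norm.natAbs = p₁ * p₂ := by
  have hL (p : ℕ) (hp : p.Prime) := isNonprincipalBelow_of_dvd_norm hα hα' hp
  by_cases hr : ∃ r : ℕ, r.Prime ∧ (r : ℤ√(-5)) ∣ α
  · obtain ⟨r, hr, hrα⟩ := hr
    have hn : α.norm.natAbs = r * r := by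
      rw [natAbs_norm_eq_of_dvd_of_irreducible hα hrα (not_isUnit_natCast hr.ne_one), norm_natCast,
        Int.natAbs_mul, Int.natAbs_natCast]
    have hrL := hL r hr (hn ▸ dvd_mul_right r r)
    exact ⟨r, r, hr, hr, hrL, hrL, hn⟩
  · push Not at hr
    exact exists_natAbs_norm_eq_mul_of_forall_not_natCast_dvd hα hL hr

theorem irreducible_of_natAbs_norm_eq_mul {α : ℤ√(-5)} {p₁ p₂ : ℕ} (hp₁ : p₁.Prime)
    (hp₂ : p₂.Prime) (h₁ : IsNonprincipalBelow p₁) (h₂ : IsNonprincipalBelow p₂)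
    (hα : α.norm.natAbs = p₁ * p₂) : Irreducible α := by
  refine ⟨fun hu => ?_, fun β γ hβγ => ?_⟩
  · rw [← norm_eq_one_iff, hα] at hu
    exact hp₁.ne_one (Nat.eq_one_of_mul_eq_one_right hu)
  have hmul : β.norm.natAbs * γ.norm.natAbs = p₁ * p₂ := by
    rw [← hα, hβγ, norm_mul, Int.natAbs_mul]
  rw [← norm_eq_one_iff, ← norm_eq_one_iff]
  obtain ⟨a, b, ha, hb, hab⟩ := Nat.dvd_mul.1 (Dvd.intro _ hmul)
  rcases hp₁.eq_one_or_self_of_dvd a ha with rfl | rfl <;>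
    rcases hp₂.eq_one_or_self_of_dvd b hb with rfl | rfl
  · exact Or.inl (by simpa using hab.symm)
  · exact absurd (by simpa using hab.symm) (natAbs_norm_ne h₂ β)
  · exact absurd (by simpa using hab.symm) (natAbs_norm_ne h₁ β)
  · rw [← hab] at hmul
    exact Or.inr ((Nat.mul_eq_left (Nat.mul_ne_zero hp₁.ne_zero hp₂.ne_zero)).1 hmul)

theorem not_prime_of_dvd_natCast {α : ℤ√(-5)} {p q : ℕ} (hp : p.Prime) (hq : q.Prime)
    (hL : IsNonprincipalBelow p) (hα : α.norm.natAbs = p * q) (hαp : α ∣ p) : ¬Prime α := by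
  intro hα'
  obtain ⟨δ, hδ⟩ := hαp
  have hδ1 : δ.norm.natAbs = 1 := by
    have h : p * p = p * (q * δ.norm.natAbs) := by
      rw [← mul_assoc, ← hα, ← Int.natAbs_mul, ← norm_mul, ← hδ, norm_natCast, Int.natAbs_mul,
        Int.natAbs_natCast]
    have hp' := Nat.eq_of_mul_eq_mul_left hp.pos h ▸ hp
    exact (Nat.prime_mul_iff.1 hp').elim And.right fun h => absurd h.2 hq.ne_one
  have hassoc : Associated α p := hδ ▸ associated_mul_unit_right α δ (norm_eq_one_iff.1 hδ1)
  obtain ⟨c, hc⟩ := exists_dvd_sq_add_five hp hL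
  exact not_prime_natCast_of_dvd hp.ne_one (by rwa [sub_neg_eq_add]) (hassoc.prime hα')

theorem not_prime_of_natAbs_norm_eq_mul {α : ℤ√(-5)} {p₁ p₂ : ℕ} (hp₁ : p₁.Prime)
    (hp₂ : p₂.Prime) (h₁ : IsNonprincipalBelow p₁) (h₂ : IsNonprincipalBelow p₂)
    (hα : α.norm.natAbs = p₁ * p₂) : ¬Prime α := by
  intro hα'
  have hdvd : α ∣ (p₁ : ℤ√(-5)) * p₂ := ⟨star α, by
    rw [← Nat.cast_mul, ← hα, ← Int.cast_natCast, Int.natCast_natAbs, Zsqrtd.abs_norm (by norm_num),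
      norm_eq_mul_conj]⟩
  rcases hα'.dvd_or_dvd hdvd with h | h
  · exact not_prime_of_dvd_natCast hp₁ hp₂ h₁ hα h hα'
  · exact not_prime_of_dvd_natCast hp₂ hp₁ h₂ (hα.trans (mul_comm _ _)) h hα'

end ZsqrtdNegFive

open ZsqrtdNegFive

/-- In `ℤ[√−5]`, an element is irreducible but not prime if and only if the
absolute value of its norm is `p₁ p₂` where each `pᵢ` is a rational prime equal
to `2` or congruent to `3` or `7` modulo `20`. -/
theorem irreducible_not_prime_iff_zsqrtd_neg_five (α : ℤ√(-5)) :
    (Irreducible α ∧ ¬Prime α) ↔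
      ∃ p₁ p₂ : ℕ, p₁.Prime ∧ p₂.Prime ∧
        (p₁ = 2 ∨ p₁ % 20 = 3 ∨ p₁ % 20 = 7) ∧
        (p₂ = 2 ∨ p₂ % 20 = 3 ∨ p₂ % 20 = 7) ∧
        (α.norm).natAbs = p₁ * p₂ := by
  refine ⟨fun ⟨hα, hα'⟩ => exists_natAbs_norm_eq_mul_of_irreducible_of_not_prime hα hα', ?_⟩
  rintro ⟨p₁, p₂, hp₁, hp₂, h₁, h₂, hα⟩
  exact ⟨irreducible_of_natAbs_norm_eq_mul hp₁ hp₂ h₁ h₂ hα,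
    not_prime_of_natAbs_norm_eq_mul hp₁ hp₂ h₁ h₂ hα⟩
end

section
/- Let G be a cyclic group of order h ≥ 6, and let g_1, ..., g_h be elements of G forming a minimal product-one sequence of length h (product is identity, no proper nonempty subproduct is identity). Then all g_i are equal to a common element c which generates G. -/
/-!
Enumerate `m` as a list `l`. Two distinct prefixes of `l` of length `< |G|` cannot have the same
product, since the block between them would be a nonempty proper product-one subsequence; so the
`|G|` prefix products enumerate `G` without repetition, and this holds for every ordering of `m`.
If `m` contained `a ≠ b`, the orderings `a, b, r` and `b, a, r` would have the same prefix products
except at length one, which would have to be the one element of `G` missed by all the others: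
both `a` and `b`. Hence `m` consists of copies of one `c`, whose powers `c ^ i, i < |G|`, exhaust `G`.
-/

namespace List

variable {G : Type*}

theorem prod_take_injective_of_minimal [CancelCommMonoid G] (l : List G)
    (hmin : ∀ s ≤ (l : Multiset G), s.prod = 1 → s = 0 ∨ s = l) :
    Function.Injective fun i : Fin l.length => (l.take i).prod := by
  refine Function.Injective.of_lt_imp_ne fun i j hij heq => ?_
  set s := (l.drop i).take (j - i)
  have hsplit : l.take j = l.take i ++ s := by
    rw [← List.take_add, Nat.add_sub_cancel' hij.le]
  have hs_prod : s.prod = 1 := by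
    simpa only [hsplit, List.prod_append, left_eq_mul] using heq
  have hs_le : (s : Multiset G) ≤ l :=
    Multiset.coe_le.2 ((List.take_sublist _ _).trans (List.drop_sublist _ _)).subperm
  have hs_length : s.length = j - i := by
    simp only [s, List.length_take, List.length_drop]
    omega
  rcases hmin s hs_le (by simpa using hs_prod) with hs | hs
  · have : s.length = 0 := by simpa using congrArg Multiset.card hs
    omega
  · have : s.length = l.length := by simpa using congrArg Multiset.card hs
    omega

theorem prod_take_bijective_of_minimal [CancelCommMonoid G] [Fintype G] (l : List G)
    (hlength : l.length = Fintype.card G)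
    (hmin : ∀ s ≤ (l : Multiset G), s.prod = 1 → s = 0 ∨ s = l) :
    Function.Bijective fun i : Fin l.length => (l.take i).prod :=
  (Fintype.bijective_iff_injective_and_card _).2
    ⟨prod_take_injective_of_minimal l hmin, by simp [hlength]⟩

theorem prod_take_cons_cons_comm [CommMonoid G] (a b : G) (r : List G) {k : ℕ} (hk : k ≠ 1) :
    ((a :: b :: r).take k).prod = ((b :: a :: r).take k).prod := by
  match k, hk with
  | 0, _ => rfl
  | k + 2, _ => simp only [List.take_succ_cons, List.prod_cons, mul_left_comm]

theorem eq_of_prod_take_cons_cons_injective_surjective [CommMonoid G] {a b : G} {r : List G}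
    (hab : Function.Injective fun i : Fin (r.length + 2) => ((a :: b :: r).take i).prod)
    (hba : Function.Surjective fun i : Fin (r.length + 2) => ((b :: a :: r).take i).prod) :
    a = b := by
  obtain ⟨k, hk⟩ := hba a
  by_cases hk1 : (k : ℕ) = 1
  · simpa [hk1] using hk.symm
  · have : k = ⟨1, by omega⟩ :=
      hab (by simpa [prod_take_cons_cons_comm a b r hk1] using hk)
    exact absurd (congrArg Fin.val this) hk1

end List

theorem Multiset.eq_of_mem_of_minimal {G : Type*} [CancelCommMonoid G] [Fintype G]
    {m : Multiset G} (hcard : Multiset.card m = Fintype.card G)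
    (hmin : ∀ s ≤ m, s.prod = 1 → s = 0 ∨ s = m) {a b : G} (ha : a ∈ m) (hb : b ∈ m) :
    a = b := by
  classical
  by_contra hab
  set r := ((m.erase a).erase b).toList
  have hm : a ::ₘ b ::ₘ (r : Multiset G) = m := by
    rw [Multiset.coe_toList, Multiset.cons_erase ((Multiset.mem_erase_of_ne (Ne.symm hab)).2 hb),
      Multiset.cons_erase ha]
  have hm' : b ::ₘ a ::ₘ (r : Multiset G) = m := by
    rw [Multiset.cons_swap, hm]
  have hbij (x y : G) (hxy : x ::ₘ y ::ₘ (r : Multiset G) = m) :=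
    List.prod_take_bijective_of_minimal (x :: y :: r)
      (by simpa [← hxy] using hcard) (by simpa [← hxy] using hmin)
  exact hab (List.eq_of_prod_take_cons_cons_injective_surjective
    (hbij a b hm).injective (hbij b a hm').surjective)

theorem minimal_product_one_of_length_card_general
    {G : Type*} [CommGroup G] [Fintype G]
    (h : ℕ) (hcard : Fintype.card G = h)
    (m : Multiset G) (hlen : Multiset.card m = h)
    (hmin : ∀ s ≤ m, s.prod = 1 → s = 0 ∨ s = m) :
    ∃ c : G, (∀ g ∈ m, g = c) ∧ Subgroup.zpowers c = ⊤ := by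
  subst hcard
  obtain ⟨c, hc⟩ := Multiset.card_pos_iff_exists_mem.1 (hlen ▸ Fintype.card_pos)
  have hconst : ∀ g ∈ m, g = c := fun g hg => Multiset.eq_of_mem_of_minimal hlen hmin hg hc
  refine ⟨c, hconst, Subgroup.eq_top_iff' _ |>.2 fun x => ?_⟩
  have hm : (List.replicate (Fintype.card G) c : Multiset G) = m := by
    rw [Multiset.coe_replicate, Multiset.eq_replicate.2 ⟨hlen, hconst⟩]
  obtain ⟨i, rfl⟩ := (List.prod_take_bijective_of_minimal _ (List.length_replicate ..)
    (hm ▸ hmin)).surjective x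
  simpa only [List.take_replicate, List.prod_replicate] using Subgroup.npow_mem_zpowers c _

/-- In a cyclic group of order `h ≥ 6`, every minimal product-one sequence of
length `h` consists of `h` copies of a single generator of the group. -/
theorem minimal_product_one_of_length_card
    {G : Type*} [CommGroup G] [Fintype G] [IsCyclic G]
    (h : ℕ) (hcard : Fintype.card G = h) (hh : 6 ≤ h)
    (m : Multiset G) (hlen : Multiset.card m = h)
    (hprod : m.prod = 1)
    (hmin : ∀ s ≤ m, s.prod = 1 → s = 0 ∨ s = m) :
    ∃ c : G, (∀ g ∈ m, g = c) ∧ Subgroup.zpowers c = ⊤ :=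
  minimal_product_one_of_length_card_general h hcard m hlen hmin
end

section
/- Let G be a cyclic group of order h ≥ 6, and let g_1, ..., g_{h−1} ∈ G form a minimal product-one sequence of length h−1. Then there is a generator c of G such that, after reordering, g_1 = ⋯ = g_{h−2} = c and g_{h−1} = c². -/
/-!
Let `|m| = |G| - 1`. If no nonempty proper submultiset of `m` has product one, then for any
ordering of `m` the `|G| - 1` products of its proper prefixes are pairwise distinct, so they miss
exactly one element of `G`. For an ordering `a, b, c, …`, swapping `a, b` (resp. `b, c`) changes a
single prefix product, into `b` (resp. `a c`); when `a ≠ b ≠ c` both are therefore the missing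
element, so `b = a c`. Applying this to suitable orderings excludes three distinct values and forces
`m = x^(|G|-2) · x²`; the powers `x, …, x^(|G|-2)` are sub-products, hence `≠ 1`, so `x` has order
`|G|`.
-/

open Multiset

theorem Set.InjOn.eq_of_notMem_image_of_card_eq_succ {α : Type*} [Fintype α] {f : ℕ → α}
    {n : ℕ} (hf : Set.InjOn f (Set.Iio n)) (hcard : Fintype.card α = n + 1) {x y : α}
    (hx : x ∉ f '' Set.Iio n) (hy : y ∉ f '' Set.Iio n) : x = y := by
  classical
  set S := (Finset.range n).image f
  have hS : S.card = n := by
    rw [Finset.card_image_of_injOn (by rwa [Finset.coe_range]), Finset.card_range]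
  have hSc : Sᶜ.card = 1 := by rw [Finset.card_compl, hS, hcard]; simp
  exact Finset.card_le_one.mp hSc.le x (by simpa [S] using hx) y (by simpa [S] using hy)

theorem Multiset.eq_replicate_count_add_replicate_count {α : Type*} [DecidableEq α]
    {m : Multiset α} {x y : α} (hxy : x ≠ y) (h : ∀ z ∈ m, z = x ∨ z = y) :
    m = replicate (m.count x) x + replicate (m.count y) y := by
  ext z
  rw [count_add, count_replicate, count_replicate]
  by_cases hzx : z = x
  · subst hzx; simp [Ne.symm hxy]
  by_cases hzy : z = y
  · subst hzy; simp [hxy]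
  rw [if_neg (Ne.symm hzx), if_neg (Ne.symm hzy), count_eq_zero]
  exact fun hz => (h z hz).elim hzx hzy

section

variable {G : Type*} [CommGroup G]

def NoProperProdOneSubmultiset (m : Multiset G) : Prop :=
  ∀ s ≤ m, s.prod = 1 → s = 0 ∨ s = m

namespace NoProperProdOneSubmultiset

variable {m : Multiset G}

theorem prod_ne_one (hm : NoProperProdOneSubmultiset m) {s : Multiset G} (hs : s ≤ m)
    (hs0 : s ≠ 0) (hsm : card s < card m) : s.prod ≠ 1 := fun h1 =>
  (hm s hs h1).elim hs0 fun h => hsm.ne (h ▸ rfl)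

theorem mul_ne_one (hm : NoProperProdOneSubmultiset m) (h2 : 2 < card m) {x y : G}
    (hx : x ∈ m) (hy : y ∈ m) (hxy : x ≠ y) : x * y ≠ 1 := by
  have hle : {x, y} ≤ m :=
    (le_iff_subset (by simpa using hxy)).2 (by simp [Multiset.insert_eq_cons, hx, hy])
  simpa using hm.prod_ne_one hle (by simp) (by simpa using h2)

theorem injOn_prod_take {l : List G} (hl : NoProperProdOneSubmultiset (l : Multiset G)) :
    Set.InjOn (fun i => (l.take i).prod) (Set.Iio l.length) := by
  suffices ∀ i j, i < j → j < l.length → (l.take i).prod ≠ (l.take j).prod by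
    intro i hi j hj hij
    rcases lt_trichotomy i j with hlt | heq | hlt
    · exact absurd hij (this i j hlt hj)
    · exact heq
    · exact absurd hij.symm (this j i hlt hi)
  intro i j hij hj heq
  set segment := (l.drop i).take (j - i)
  have htake : l.take j = l.take i ++ segment := by
    rw [← List.take_add, Nat.add_sub_cancel' hij.le]
  have hsub : (segment : Multiset G) ≤ l :=
    coe_le.2 (((l.drop i).take_sublist _).trans (l.drop_sublist i)).subperm
  refine hl.prod_ne_one hsub ?_ ?_ ?_
  · simp [segment]; omega
  · simp [segment]; omega
  · rw [htake, List.prod_append] at heq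
    simpa using heq.symm

theorem prod_take_notMem_image {l l' : List G}
    (hl' : NoProperProdOneSubmultiset (l' : Multiset G)) (hlen : l'.length = l.length) {k : ℕ}
    (hk : k < l.length) (hagree : ∀ i ≠ k, (l.take i).prod = (l'.take i).prod)
    (hne : (l.take k).prod ≠ (l'.take k).prod) :
    (l'.take k).prod ∉ (fun i => (l.take i).prod) '' Set.Iio l.length := by
  rintro ⟨i, hi, heq⟩
  by_cases hik : i = k
  · exact hne (hik ▸ heq)
  · refine hik (hl'.injOn_prod_take (by simpa [hlen] using hi) (by simpa [hlen] using hk) ?_)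
    exact (hagree i hik).symm.trans heq

theorem eq_mul_of_cons_cons_cons [Fintype G] (hm : NoProperProdOneSubmultiset m)
    (hcard : Fintype.card G = card m + 1) {a b c : G} {s : Multiset G}
    (hsplit : a ::ₘ b ::ₘ c ::ₘ s = m) (hab : a ≠ b) (hbc : b ≠ c) : b = a * c := by
  obtain ⟨r, rfl⟩ : ∃ r : List G, (r : Multiset G) = s := Quotient.exists_rep s
  have hl : ((a :: b :: c :: r : List G) : Multiset G) = m := by simpa using hsplit
  have hl' : ((b :: a :: c :: r : List G) : Multiset G) = m := by
    rw [← hsplit, cons_swap a b]; rfl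
  have hl'' : ((a :: c :: b :: r : List G) : Multiset G) = m := by
    rw [← hsplit, cons_swap b c]; rfl
  have hb := prod_take_notMem_image (l := a :: b :: c :: r)
    (l' := b :: a :: c :: r) (by rwa [hl']) rfl (k := 1) (by simp)
    (by rintro (_ | _ | i) hi <;> simp_all [mul_left_comm]) (by simpa using hab)
  have hac := prod_take_notMem_image (l := a :: b :: c :: r)
    (l' := a :: c :: b :: r) (by rwa [hl'']) rfl (k := 2) (by simp)
    (by rintro (_ | _ | _ | i) hi <;> simp_all [mul_left_comm]) (by simpa using hbc)
  have hlen : Fintype.card G = (a :: b :: c :: r).length + 1 := by rw [hcard, ← hl]; simp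
  simp only [List.take_succ_cons, List.take_zero, List.prod_cons, List.prod_nil, mul_one] at hb hac
  exact (by rwa [hl] : NoProperProdOneSubmultiset _).injOn_prod_take
    |>.eq_of_notMem_image_of_card_eq_succ hlen hb hac

theorem eq_or_eq_of_mem [Fintype G] (hm : NoProperProdOneSubmultiset m)
    (hcard : Fintype.card G = card m + 1) (h3 : 3 < card m) {x y z : G} (hx : x ∈ m)
    (hy : y ∈ m) (hz : z ∈ m) (hxy : x ≠ y) : z = x ∨ z = y := by
  by_contra! ⟨hzx, hzy⟩
  have hle : {x, y, z} ≤ m := (le_iff_subset (by simp [*, Ne.symm hzx, Ne.symm hzy])).2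
    (by simp [Multiset.insert_eq_cons, hx, hy, hz])
  obtain ⟨s, hs⟩ := Multiset.le_iff_exists_add.1 hle
  have hsplit : x ::ₘ y ::ₘ z ::ₘ s = m := by simp [hs, Multiset.insert_eq_cons]
  have hyxz : y = x * z := hm.eq_mul_of_cons_cons_cons hcard hsplit hxy (Ne.symm hzy)
  have hzxy : z = x * y := hm.eq_mul_of_cons_cons_cons hcard
    (by rwa [cons_swap y z] at hsplit) (Ne.symm hzx) hzy
  have hxyz : x = y * z := hm.eq_mul_of_cons_cons_cons hcard
    (by rwa [cons_swap x y] at hsplit) (Ne.symm hxy) (Ne.symm hzx)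
  have hxx : x * x = 1 := mul_eq_right.1 (by rw [mul_assoc, ← hzxy, ← hyxz])
  refine hm.prod_ne_one hle (by simp) (by simpa using h3) ?_
  simp [Multiset.insert_eq_cons, ← hxyz, hxx]

theorem eq_mul_self_of_replicate_add_replicate [Fintype G] (hm : NoProperProdOneSubmultiset m)
    (hcard : Fintype.card G = card m + 1) {x y : G} (hxy : x ≠ y) {p q : ℕ}
    (hsplit : replicate (p + 2) x + replicate (q + 1) y = m) : q = 0 ∧ y = x * x := by
  have hy : y = x * x := hm.eq_mul_of_cons_cons_cons hcard (s := replicate p x + replicate q y)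
    (by rw [← hsplit]; simp [replicate_succ, cons_swap y x]) hxy (Ne.symm hxy)
  refine ⟨?_, hy⟩
  obtain _ | q := q
  · rfl
  have hx : x = y * y :=
    hm.eq_mul_of_cons_cons_cons hcard (s := replicate (p + 1) x + replicate q y)
    (by rw [← hsplit]; simp [replicate_succ, cons_swap y x]) (Ne.symm hxy) hxy
  have hxxx : x * x * x = 1 := mul_eq_right.1 <| calc
    x * x * x * x = y * y := by rw [hy, mul_assoc]
    _ = x := hx.symm
  refine absurd ?_ (hm.mul_ne_one (by rw [← hsplit]; simp) (x := x) (y := y) ?_ ?_ hxy)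
  · rw [hy, ← mul_assoc, hxxx]
  all_goals rw [← hsplit]; simp

theorem orderOf_eq_card [Fintype G] (hm : NoProperProdOneSubmultiset m)
    (hcard : Fintype.card G = card m + 1) (h2 : 2 ≤ card m) {x : G}
    (hx : replicate (card m - 1) x ≤ m) : orderOf x = Fintype.card G := by
  have hpow : ∀ k, 0 < k → k < card m → x ^ k ≠ 1 := fun k hk hkm => by
    have hle : replicate k x ≤ m := (replicate_le_replicate x).2 (by omega) |>.trans hx
    simpa using hm.prod_ne_one hle (card_pos.1 (by simpa)) (by simpa)
  have hge : card m ≤ orderOf x := by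
    by_contra! hlt
    exact hpow _ (orderOf_pos x) hlt (pow_orderOf_eq_one x)
  have hdvd : orderOf x ∣ card m + 1 := hcard ▸ orderOf_dvd_card
  rcases hge.eq_or_lt with heq | hlt
  · rw [← heq, Nat.dvd_add_self_left] at hdvd
    have := Nat.le_of_dvd one_pos hdvd
    omega
  · rw [hcard]; exact le_antisymm (Nat.le_of_dvd (Nat.succ_pos _) hdvd) hlt

theorem exists_eq_replicate_add_mul_self [Fintype G] (hm : NoProperProdOneSubmultiset m)
    (hcard : Fintype.card G = card m + 1) (h3 : 3 < card m) {x y : G} (hx : x ∈ m)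
    (hy : y ∈ m) (hxy : x ≠ y) : ∃ c, m = replicate (card m - 1) c + {c * c} := by
  classical
  have hsplit := eq_replicate_count_add_replicate_count hxy
    fun z hz => hm.eq_or_eq_of_mem hcard h3 hx hy hz hxy
  wlog hp : 2 ≤ count x m generalizing x y
  · refine this hy hx (Ne.symm hxy) (by rwa [add_comm]) ?_
    have := congrArg card hsplit
    simp only [card_add, card_replicate] at this
    omega
  obtain ⟨p, hp⟩ : ∃ p, count x m = p + 2 := ⟨_, (Nat.sub_add_cancel hp).symm⟩
  obtain ⟨q, hq⟩ : ∃ q, count y m = q + 1 :=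
    ⟨_, (Nat.succ_pred_eq_of_pos (count_pos.2 hy)).symm⟩
  rw [hp, hq] at hsplit
  obtain ⟨rfl, rfl⟩ := hm.eq_mul_self_of_replicate_add_replicate hcard hxy hsplit.symm
  subst hsplit
  exact ⟨x, by simp⟩

end NoProperProdOneSubmultiset

end

theorem minimal_product_one_of_length_card_sub_one_general
    {G : Type*} [CommGroup G] [Fintype G]
    (h : ℕ) (hcard : Fintype.card G = h) (hh : 6 ≤ h)
    (m : Multiset G) (hlen : Multiset.card m = h - 1)
    (hprod : m.prod = 1)
    (hmin : ∀ s ≤ m, s.prod = 1 → s = 0 ∨ s = m) :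
    ∃ c : G, Subgroup.zpowers c = ⊤ ∧
      m = Multiset.replicate (h - 2) c + {c ^ 2} := by
  classical
  have hm : NoProperProdOneSubmultiset m := hmin
  have hcard' : Fintype.card G = card m + 1 := by omega
  obtain ⟨x, hx⟩ := exists_mem_of_ne_zero ((card_pos (s := m)).1 (by omega))
  by_cases hconst : ∀ y ∈ m, y = x
  · have hord := hm.orderOf_eq_card hcard' (by omega) (x := x)
      (le_count_iff_replicate_le.1 (by rw [count_eq_card.2 fun y hy => (hconst y hy).symm]; omega))
    rw [eq_replicate_card.2 hconst, prod_replicate] at hprod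
    exact absurd hprod (pow_ne_one_of_lt_orderOf (by omega) (by omega))
  push Not at hconst
  obtain ⟨y, hy, hyx⟩ := hconst
  obtain ⟨c, hc⟩ := hm.exists_eq_replicate_add_mul_self hcard' (by omega) hx hy (Ne.symm hyx)
  have hord := hm.orderOf_eq_card hcard' (by omega) (x := c)
    (by nth_rw 2 [hc]; exact le_add_right _ _)
  refine ⟨c, (Subgroup.card_eq_iff_eq_top _).1 ?_, ?_⟩
  · rw [Nat.card_zpowers, hord, Nat.card_eq_fintype_card]
  · rw [hc, sq, hlen]; congr 2

/-- In a cyclic group of order `h ≥ 6`, every minimal product-one sequence of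
length `h − 1` consists, up to reordering, of `h − 2` copies of a generator `c`
together with one copy of `c²`. -/
theorem minimal_product_one_of_length_card_sub_one
    {G : Type*} [CommGroup G] [Fintype G] [IsCyclic G]
    (h : ℕ) (hcard : Fintype.card G = h) (hh : 6 ≤ h)
    (m : Multiset G) (hlen : Multiset.card m = h - 1)
    (hprod : m.prod = 1)
    (hmin : ∀ s ≤ m, s.prod = 1 → s = 0 ∨ s = m) :
    ∃ c : G, Subgroup.zpowers c = ⊤ ∧
      m = Multiset.replicate (h - 2) c + {c ^ 2} :=
  minimal_product_one_of_length_card_sub_one_general h hcard hh m hlen hprod hmin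
end
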